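/- Let p be a prime, d ≥ 2 an integer, ε', ε'' ∈ {0,1}^{d-1} with ε' ≠ ε'', and a, b ∈ ℤ_p^d. Define Z = {j : 1 ≤ j ≤ d-1, ε'_j ≠ ε''_j and a_j² + b_j² ≠ 0} and assume Z ≠ ∅; let ℓ₀ = min Z. Assume a_1 ≢ 0 (mod p), a_{ℓ₀} ≢ 0 (mod p), and b_{ℓ₀} ≢ 0 (mod p). If a_{ℓ₀+1} b_1^{ℓ₀+1} ≡ a_1^{ℓ₀+1} b_{ℓ₀+1} (mod p), then P^{a,ε'}_{d,p} ∩ P^{b,ε''}_{d,p} = {(0,...,0)}. -/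
import Mathlib


/-- The `i`-th coordinate (for `i = 1,…,d`) of the `j`-th point of the generalized
`p`-set with parameters `a` and `ε` (and `a'_h = ε_h * a_h`), namely the fractional
part of `(∑_{h=1}^{i-1} a'_h j^h + a_i j^i) / N`. -/
noncomputable def genCoord (N : ℕ) (a ε : ℕ → ℤ) (j i : ℕ) : ℝ :=
  Int.fract ((((∑ h ∈ Finset.Ico 1 i, ε h * a h * (j : ℤ) ^ h) + a i * (j : ℤ) ^ i : ℤ) : ℝ) / (N : ℝ))

/-- The point `x_j^{a,ε} ∈ [0,1)^d` of the generalized `p`-set. -/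
noncomputable def genPoint (p d : ℕ) (a ε : ℕ → ℤ) (j : ℕ) : Fin d → ℝ :=
  fun i => genCoord p a ε j (i.1 + 1)

/-- The generalized `p`-set `P^{a,ε}_{d,p} = {x_j^{a,ε} : j = 0,…,p-1} ⊂ [0,1)^d`. -/
noncomputable def genPset (p d : ℕ) (a ε : ℕ → ℤ) : Set (Fin d → ℝ) :=
  {x | ∃ j < p, x = genPoint p d a ε j}

private lemma fract_div_nat_dvd {p : ℕ} (hp : p ≠ 0) {m n : ℤ}
    (h : Int.fract ((m:ℝ)/(p:ℝ)) = Int.fract ((n:ℝ)/(p:ℝ))) : (p:ℤ) ∣ m - n := by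
  rw [Int.fract_eq_fract] at h
  obtain ⟨z, hz⟩ := h
  refine ⟨z, ?_⟩
  have hp' : (p:ℝ) ≠ 0 := Nat.cast_ne_zero.mpr hp
  have : ((m - n : ℤ) : ℝ) = ((p * z : ℤ) : ℝ) := by
    push_cast
    field_simp at hz
    linarith
  exact_mod_cast this

private lemma genPoint_zero' (p d : ℕ) (a ε : ℕ → ℤ) : genPoint p d a ε 0 = 0 := by
  funext i
  show genCoord p a ε 0 (i.1 + 1) = 0
  have h1 : (∑ h ∈ Finset.Ico 1 (i.1+1), ε h * a h * (0 : ℤ) ^ h) = 0 := by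
    refine Finset.sum_eq_zero fun h hh => ?_
    have : h ≠ 0 := by have := (Finset.mem_Ico.mp hh).1; omega
    rw [zero_pow this]; ring
  have h2 : a (i.1+1) * (0:ℤ) ^ (i.1+1) = 0 := by
    rw [zero_pow (by omega)]; ring
  simp [genCoord, h1, h2]

/-- For `ε', ε'' ∈ {0,1}^{d-1}` with `ε' ≠ ε''` and `a, b ∈ ℤ_p^d` such that the set
`Z = {j : 1 ≤ j ≤ d-1, ε'_j ≠ ε''_j and a_j² + b_j² ≠ 0}` is nonempty, with `ℓ₀ = min Z`,
`a₁ ≢ 0`, `a_{ℓ₀} ≢ 0`, `b_{ℓ₀} ≢ 0 (mod p)`: if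
`a_{ℓ₀+1} b₁^{ℓ₀+1} ≡ a₁^{ℓ₀+1} b_{ℓ₀+1} (mod p)`, then
`P^{a,ε'}_{d,p} ∩ P^{b,ε''}_{d,p} = {(0,…,0)}`. -/
theorem gen_pset_inter_of_congr (p d : ℕ) (hp : p.Prime) (hd : 2 ≤ d) (ε' ε'' : ℕ → ℤ)
    (hε' : ∀ i ∈ Finset.Icc 1 (d - 1), ε' i = 0 ∨ ε' i = 1)
    (hε'' : ∀ i ∈ Finset.Icc 1 (d - 1), ε'' i = 0 ∨ ε'' i = 1)
    (hεne : ∃ j ∈ Finset.Icc 1 (d - 1), ε' j ≠ ε'' j) (a b : ℕ → ℤ)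
    (ha : ∀ i ∈ Finset.Icc 1 d, 0 ≤ a i ∧ a i ≤ (p : ℤ) - 1)
    (hb : ∀ i ∈ Finset.Icc 1 d, 0 ≤ b i ∧ b i ≤ (p : ℤ) - 1)
    (hZ : ∃ j ∈ Finset.Icc 1 (d - 1), ε' j ≠ ε'' j ∧ (a j) ^ 2 + (b j) ^ 2 ≠ 0)
    (ℓ₀ : ℕ)
    (hl : ℓ₀ = sInf {j : ℕ | 1 ≤ j ∧ j ≤ d - 1 ∧ ε' j ≠ ε'' j ∧ (a j) ^ 2 + (b j) ^ 2 ≠ 0})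
    (ha1 : ¬ ((p : ℤ) ∣ a 1)) (hal : ¬ ((p : ℤ) ∣ a ℓ₀)) (hbl : ¬ ((p : ℤ) ∣ b ℓ₀))
    (hcong : a (ℓ₀ + 1) * (b 1) ^ (ℓ₀ + 1) ≡ (a 1) ^ (ℓ₀ + 1) * b (ℓ₀ + 1) [ZMOD (p : ℤ)]) :
    genPset p d a ε' ∩ genPset p d b ε'' = {0} := by
  haveI : Fact p.Prime := ⟨hp⟩
  have hp0 : p ≠ 0 := hp.pos.ne'
  -- basic facts about ℓ₀
  have hZne : {j : ℕ | 1 ≤ j ∧ j ≤ d - 1 ∧ ε' j ≠ ε'' j ∧ (a j) ^ 2 + (b j) ^ 2 ≠ 0}.Nonempty := by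
    obtain ⟨j, hj, h1, h2⟩ := hZ
    exact ⟨j, (Finset.mem_Icc.mp hj).1, (Finset.mem_Icc.mp hj).2, h1, h2⟩
  have hlmem : 1 ≤ ℓ₀ ∧ ℓ₀ ≤ d - 1 ∧ ε' ℓ₀ ≠ ε'' ℓ₀ ∧ (a ℓ₀)^2 + (b ℓ₀)^2 ≠ 0 := by
    rw [hl]; exact Nat.sInf_mem hZne
  obtain ⟨hl1, hld, hlεne, hlab⟩ := hlmem
  have hlmin : ∀ i, i < ℓ₀ → ¬(1 ≤ i ∧ i ≤ d - 1 ∧ ε' i ≠ ε'' i ∧ (a i)^2 + (b i)^2 ≠ 0) := by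
    intro i hi
    exact Nat.notMem_of_lt_sInf (hl ▸ hi)
  ext x
  simp only [Set.mem_inter_iff, Set.mem_singleton_iff, genPset, Set.mem_setOf_eq]
  constructor
  · rintro ⟨⟨j, hj, rfl⟩, ⟨k, hk, hxk⟩⟩
    suffices hj0 : (j : ZMod p) = 0 by
      have hdj : p ∣ j := (ZMod.natCast_eq_zero_iff j p).mp hj0
      have hj00 : j = 0 := Nat.eq_zero_of_dvd_of_lt hdj hj
      rw [hj00]
      exact genPoint_zero' p d a ε'
    by_contra hJ
    -- coordinate congruences in ZMod p
    have hcoord : ∀ i, 1 ≤ i → i ≤ d →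
        (∑ h ∈ Finset.Ico 1 i, (ε' h : ZMod p) * (a h : ZMod p) * (j : ZMod p) ^ h)
          + (a i : ZMod p) * (j : ZMod p) ^ i
        = (∑ h ∈ Finset.Ico 1 i, (ε'' h : ZMod p) * (b h : ZMod p) * (k : ZMod p) ^ h)
          + (b i : ZMod p) * (k : ZMod p) ^ i := by
      intro i h1 h2
      have hfr : genCoord p a ε' j i = genCoord p b ε'' k i := by
        have := congrFun hxk ⟨i - 1, by omega⟩
        simpa [genPoint, Nat.sub_add_cancel h1] using this
      simp only [genCoord] at hfr
      have hdvd := fract_div_nat_dvd hp0 hfr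
      have := (ZMod.intCast_zmod_eq_zero_iff_dvd _ p).mpr hdvd
      push_cast at this
      linear_combination this
    have hdiff : ∀ i, 1 ≤ i → i ≤ d - 1 →
        (ε' i : ZMod p) * (a i : ZMod p) * (j : ZMod p) ^ i
          + (a (i+1) : ZMod p) * (j : ZMod p) ^ (i+1) - (a i : ZMod p) * (j : ZMod p) ^ i
        = (ε'' i : ZMod p) * (b i : ZMod p) * (k : ZMod p) ^ i
          + (b (i+1) : ZMod p) * (k : ZMod p) ^ (i+1) - (b i : ZMod p) * (k : ZMod p) ^ i := by
      intro i h1 h2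
      have e1 := hcoord i h1 (by omega)
      have e2 := hcoord (i+1) (by omega) (by omega)
      rw [Finset.sum_Ico_succ_top h1, Finset.sum_Ico_succ_top h1] at e2
      linear_combination e2 - e1
    have hmain : ∀ i, 1 ≤ i → i ≤ ℓ₀ →
        (a i : ZMod p) * (j : ZMod p) ^ i = (b i : ZMod p) * (k : ZMod p) ^ i := by
      intro i h1
      induction i, h1 using Nat.le_induction with
      | base =>
        intro _
        have := hcoord 1 le_rfl (by omega)
        simpa using this
      | succ i hi ih =>
        intro hle
        have hihyp := ih (by omega)
        have hd1 : i ≤ d - 1 := by omega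
        have hdi := hdiff i hi hd1
        by_cases hee : ε' i = ε'' i
        · rw [hee] at hdi
          linear_combination hdi - ((ε'' i : ZMod p) - 1) * hihyp
        · have hab : (a i)^2 + (b i)^2 = 0 := by
            by_contra hc
            exact hlmin i (by omega) ⟨hi, hd1, hee, hc⟩
          have ha0 : a i = 0 := by nlinarith [sq_nonneg (a i), sq_nonneg (b i)]
          have hb0 : b i = 0 := by nlinarith [sq_nonneg (a i), sq_nonneg (b i)]
          rw [ha0, hb0] at hdi
          push_cast at hdi
          linear_combination hdi
    -- casts of hypotheses
    have hA1 : (a 1 : ZMod p) ≠ 0 := fun h =>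
      ha1 ((ZMod.intCast_zmod_eq_zero_iff_dvd _ p).mp h)
    have hAl : (a ℓ₀ : ZMod p) ≠ 0 := fun h =>
      hal ((ZMod.intCast_zmod_eq_zero_iff_dvd _ p).mp h)
    have hcong2 : (a (ℓ₀+1) : ZMod p) * (b 1 : ZMod p) ^ (ℓ₀+1)
        = (a 1 : ZMod p) ^ (ℓ₀+1) * (b (ℓ₀+1) : ZMod p) := by
      have := (ZMod.intCast_eq_intCast_iff' _ _ _).mpr hcong
      push_cast at this
      exact this
    have hml := hmain ℓ₀ hl1 le_rfl
    have hm1 := hmain 1 le_rfl hl1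
    have hdl := hdiff ℓ₀ hl1 hld
    have key : ((ε' ℓ₀ : ZMod p) - (ε'' ℓ₀ : ZMod p)) * ((a ℓ₀ : ZMod p) * (j : ZMod p) ^ ℓ₀)
        = (b (ℓ₀+1) : ZMod p) * (k : ZMod p) ^ (ℓ₀+1)
          - (a (ℓ₀+1) : ZMod p) * (j : ZMod p) ^ (ℓ₀+1) := by
      linear_combination hdl + (1 - (ε'' ℓ₀ : ZMod p)) * hml
    have hpow : ((a 1 : ZMod p) * (j : ZMod p)) ^ (ℓ₀+1)
        = ((b 1 : ZMod p) * (k : ZMod p)) ^ (ℓ₀+1) := by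
      have : (a 1 : ZMod p) * (j : ZMod p) = (b 1 : ZMod p) * (k : ZMod p) := by
        simpa using hm1
      rw [this]
    have heq : (a 1 : ZMod p) ^ (ℓ₀+1) *
        ((b (ℓ₀+1) : ZMod p) * (k : ZMod p) ^ (ℓ₀+1)
          - (a (ℓ₀+1) : ZMod p) * (j : ZMod p) ^ (ℓ₀+1)) = 0 := by
      linear_combination (-((k : ZMod p) ^ (ℓ₀+1))) * hcong2 - (a (ℓ₀+1) : ZMod p) * hpow
    have heq2 : (b (ℓ₀+1) : ZMod p) * (k : ZMod p) ^ (ℓ₀+1)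
        - (a (ℓ₀+1) : ZMod p) * (j : ZMod p) ^ (ℓ₀+1) = 0 := by
      rcases mul_eq_zero.mp heq with h | h
      · exact absurd (pow_eq_zero_iff (by omega) |>.mp h) hA1
      · exact h
    have hεd : ((ε' ℓ₀ : ZMod p) - (ε'' ℓ₀ : ZMod p)) ≠ 0 := by
      have hmem : ℓ₀ ∈ Finset.Icc 1 (d-1) := Finset.mem_Icc.mpr ⟨hl1, hld⟩
      rcases hε' ℓ₀ hmem with h1 | h1 <;> rcases hε'' ℓ₀ hmem with h2 | h2
      · exact absurd (h1.trans h2.symm) hlεne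
      · rw [h1, h2]; push_cast; rw [zero_sub]; exact neg_ne_zero.mpr one_ne_zero
      · rw [h1, h2]; push_cast; rw [sub_zero]; exact one_ne_zero
      · exact absurd (h1.trans h2.symm) hlεne
    have hfinal : ((ε' ℓ₀ : ZMod p) - (ε'' ℓ₀ : ZMod p)) * ((a ℓ₀ : ZMod p) * (j : ZMod p) ^ ℓ₀)
        = 0 := by rw [key, heq2]
    have hJ' : (j : ZMod p) ≠ 0 := hJ
    rcases mul_eq_zero.mp hfinal with h | h
    · exact hεd h
    · rcases mul_eq_zero.mp h with h' | h'
      · exact hAl h'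
      · exact hJ' (pow_eq_zero_iff (by omega) |>.mp h')
  · rintro rfl
    exact ⟨⟨0, hp.pos, (genPoint_zero' p d a ε').symm⟩,
      ⟨0, hp.pos, (genPoint_zero' p d b ε'').symm⟩⟩
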